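/- For all real a > 0 and b > 0, (a·b)/(a+b) ≤ Γ(a+b)/(Γ(a)Γ(b)) ≤ 2^{a+b} · (a·b)/(a+b). -/
import Mathlib

open Real intervalIntegral

lemma aux_rpow_lower {c s : ℝ} (hc : 0 < c) (hs1 : 1 / 2 ≤ s) (hs2 : s ≤ 1) :
    (2 : ℝ) ^ (-c) ≤ s ^ (c - 1) := by
  have hs0 : (0 : ℝ) < s := lt_of_lt_of_le (by norm_num) hs1
  rcases le_total c 1 with h | h
  · calc (2 : ℝ) ^ (-c) ≤ 1 :=
          Real.rpow_le_one_of_one_le_of_nonpos (by norm_num) (by linarith)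
      _ ≤ s ^ (c - 1) :=
          Real.one_le_rpow_of_pos_of_le_one_of_nonpos hs0 hs2 (by linarith)
  · have h1 : ((1 : ℝ) / 2) ^ (c - 1) ≤ s ^ (c - 1) :=
      Real.rpow_le_rpow (by norm_num) hs1 (by linarith)
    have h2 : ((1 : ℝ) / 2) ^ (c - 1) = (2 : ℝ) ^ (1 - c) := by
      rw [one_div, Real.inv_rpow (by norm_num), ← Real.rpow_neg (by norm_num)]
      ring_nf
    have h3 : (2 : ℝ) ^ (-c) ≤ (2 : ℝ) ^ (1 - c) :=
      Real.rpow_le_rpow_of_exponent_le (by norm_num) (by linarith)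
    rw [h2] at h1
    linarith

lemma aux_pointwise_upper {a b t : ℝ} (ha : 0 < a) (hb : 0 < b)
    (ht0 : 0 ≤ t) (ht1 : t ≤ 1) :
    t ^ (a - 1) * (1 - t) ^ (b - 1) ≤ t ^ (a - 1) + (1 - t) ^ (b - 1) := by
  have hx0 : (0 : ℝ) ≤ t ^ (a - 1) := Real.rpow_nonneg ht0 _
  have hy0 : (0 : ℝ) ≤ (1 - t) ^ (b - 1) := Real.rpow_nonneg (by linarith) _
  rcases le_or_gt a 1 with hA | hA
  · rcases le_or_gt b 1 with hB | hB
    · rcases eq_or_lt_of_le ht0 with h0 | h0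
      · have h : (1 - t) ^ (b - 1) = 1 := by rw [← h0]; norm_num
        rw [h]; linarith
      rcases eq_or_lt_of_le ht1 with h1 | h1
      · have h : (1 - t) ^ (b - 1) = (0 : ℝ) ^ (b - 1) := by rw [h1]; norm_num
        rcases eq_or_ne (b - 1) 0 with hb1 | hb1
        · rw [h, hb1, Real.rpow_zero]; linarith
        · rw [h, Real.zero_rpow hb1]; simpa using hx0
      set u := t ^ (1 - a) with hu
      set v := (1 - t) ^ (1 - b) with hv
      have hupos : 0 < u := Real.rpow_pos_of_pos h0 _
      have hvpos : 0 < v := Real.rpow_pos_of_pos (by linarith) _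
      have hxu : t ^ (a - 1) = u⁻¹ := by
        rw [hu, ← Real.rpow_neg h0.le]; ring_nf
      have hyv : (1 - t) ^ (b - 1) = v⁻¹ := by
        rw [hv, ← Real.rpow_neg (by linarith : (0:ℝ) ≤ 1 - t)]; ring_nf
      have hut : t ≤ u := by
        calc t = t ^ (1 : ℝ) := (Real.rpow_one t).symm
          _ ≤ t ^ (1 - a) := Real.rpow_le_rpow_of_exponent_ge h0 h1.le (by linarith)
      have hvt : 1 - t ≤ v := by
        calc 1 - t = (1 - t) ^ (1 : ℝ) := (Real.rpow_one _).symm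
          _ ≤ (1 - t) ^ (1 - b) :=
            Real.rpow_le_rpow_of_exponent_ge (by linarith) (by linarith) (by linarith)
      have huv : 1 ≤ u + v := by linarith
      rw [hxu, hyv]
      calc u⁻¹ * v⁻¹ = u⁻¹ * v⁻¹ * 1 := by ring
        _ ≤ u⁻¹ * v⁻¹ * (u + v) := by
            apply mul_le_mul_of_nonneg_left huv; positivity
        _ = u⁻¹ + v⁻¹ := by field_simp; ring
    · have h : (1 - t) ^ (b - 1) ≤ 1 :=
        Real.rpow_le_one (by linarith) (by linarith) (by linarith)
      nlinarith
  · have h : t ^ (a - 1) ≤ 1 := Real.rpow_le_one ht0 ht1 (by linarith)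
    nlinarith

lemma aux_integrable (a b : ℝ) (ha : 0 < a) (hb : 0 < b) :
    IntervalIntegrable (fun t : ℝ => t ^ (a - 1) * (1 - t) ^ (b - 1))
      MeasureTheory.volume 0 1 := by
  have h1 : IntervalIntegrable (fun t : ℝ => t ^ (a - 1) * (1 - t) ^ (b - 1))
      MeasureTheory.volume 0 (1 / 2) := by
    apply IntervalIntegrable.mul_continuousOn
      (intervalIntegrable_rpow' (by linarith))
    apply ContinuousOn.rpow_const (by fun_prop)
    intro x hx
    rw [Set.uIcc_of_le (by norm_num)] at hx
    left; intro h; have := hx.2; norm_num at this h; linarith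
  have h2 : IntervalIntegrable (fun t : ℝ => t ^ (a - 1) * (1 - t) ^ (b - 1))
      MeasureTheory.volume (1 / 2) 1 := by
    have hbint : IntervalIntegrable (fun t : ℝ => (1 - t) ^ (b - 1))
        MeasureTheory.volume (1 / 2) 1 := by
      have := (intervalIntegrable_rpow' (r := b - 1) (by linarith)
        (a := 0) (b := 1 / 2)).comp_sub_left 1
      norm_num at this
      exact this.symm
    have := hbint.continuousOn_mul (g := fun t : ℝ => t ^ (a - 1)) ?_
    · simpa [mul_comm] using this
    · apply ContinuousOn.rpow_const (by fun_prop)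
      intro x hx
      rw [Set.uIcc_of_le (by norm_num)] at hx
      left; intro h; have := hx.1; norm_num [h] at this
  exact h1.trans h2

lemma aux_gamma_eq (a b : ℝ) (ha : 0 < a) (hb : 0 < b) :
    Real.Gamma a * Real.Gamma b =
      Real.Gamma (a + b) * ∫ t in (0:ℝ)..1, t ^ (a - 1) * (1 - t) ^ (b - 1) := by
  have hbeta : Complex.betaIntegral a b =
      ((∫ t in (0:ℝ)..1, t ^ (a - 1) * (1 - t) ^ (b - 1) : ℝ) : ℂ) := by
    rw [Complex.betaIntegral, ← intervalIntegral.integral_ofReal]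
    apply intervalIntegral.integral_congr
    intro x hx
    rw [Set.uIcc_of_le (by norm_num)] at hx
    have hx0 : (0:ℝ) ≤ x := hx.1
    have hx1 : (0:ℝ) ≤ 1 - x := by linarith [hx.2]
    simp only [Complex.ofReal_mul]
    rw [Complex.ofReal_cpow hx0, Complex.ofReal_cpow hx1]
    push_cast
    ring_nf
  have key := Complex.Gamma_mul_Gamma_eq_betaIntegral
    (s := (a : ℂ)) (t := (b : ℂ)) (by simpa using ha) (by simpa using hb)
  rw [hbeta] at key
  have : ((a : ℂ) + b) = ((a + b : ℝ) : ℂ) := by push_cast; ring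
  rw [this, Complex.Gamma_ofReal, Complex.Gamma_ofReal, Complex.Gamma_ofReal] at key
  exact_mod_cast key

lemma aux_rpow_integral (a : ℝ) (ha : 0 < a) (c : ℝ) (hc : 0 < c) :
    ∫ t in (0:ℝ)..c, t ^ (a - 1) = c ^ a / a := by
  rw [integral_rpow (Or.inl (by linarith))]
  rw [show a - 1 + 1 = a by ring, Real.zero_rpow ha.ne']
  ring

/-- For all `a, b > 0`,
`(a*b)/(a+b) ≤ Γ(a+b)/(Γ(a)Γ(b)) ≤ 2^(a+b) * (a*b)/(a+b)`. -/
theorem betaPrime_normalizing_constant_bounds (a b : ℝ) (ha : 0 < a) (hb : 0 < b) :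
    a * b / (a + b) ≤ Real.Gamma (a + b) / (Real.Gamma a * Real.Gamma b) ∧
      Real.Gamma (a + b) / (Real.Gamma a * Real.Gamma b) ≤
        (2 : ℝ) ^ (a + b) * (a * b / (a + b)) := by
  set f : ℝ → ℝ := fun t => t ^ (a - 1) * (1 - t) ^ (b - 1) with hf_def
  set B : ℝ := ∫ t in (0:ℝ)..1, f t with hB_def
  have hf : IntervalIntegrable f MeasureTheory.volume 0 1 := aux_integrable a b ha hb
  have hkey : Real.Gamma a * Real.Gamma b = Real.Gamma (a + b) * B :=
    aux_gamma_eq a b ha hb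
  -- basic integrable pieces
  have hga : IntervalIntegrable (fun t : ℝ => t ^ (a - 1)) MeasureTheory.volume 0 1 :=
    intervalIntegrable_rpow' (by linarith)
  have hgb : IntervalIntegrable (fun t : ℝ => (1 - t) ^ (b - 1)) MeasureTheory.volume 0 1 := by
    have := (intervalIntegrable_rpow' (r := b - 1) (by linarith)
      (a := 0) (b := 1)).comp_sub_left 1
    norm_num at this
    exact this.symm
  -- upper bound on B
  have hval_a : ∫ t in (0:ℝ)..1, t ^ (a - 1) = 1 / a := by
    rw [aux_rpow_integral a ha 1 one_pos, Real.one_rpow]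
  have hval_b : ∫ t in (0:ℝ)..1, (1 - t) ^ (b - 1) = 1 / b := by
    rw [intervalIntegral.integral_comp_sub_left (fun t => t ^ (b - 1)) 1]
    norm_num
    rw [aux_rpow_integral b hb 1 one_pos, Real.one_rpow]
    norm_num
  have hBle : B ≤ 1 / a + 1 / b := by
    have hmono : B ≤ ∫ t in (0:ℝ)..1, (t ^ (a - 1) + (1 - t) ^ (b - 1)) := by
      apply integral_mono_on (by norm_num) hf (hga.add hgb)
      intro t ht
      exact aux_pointwise_upper ha hb ht.1 ht.2
    rwa [integral_add hga hgb, hval_a, hval_b] at hmono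
  -- lower bound on B
  have hsub1 : Set.uIcc (0:ℝ) (1/2) ⊆ Set.uIcc (0:ℝ) 1 := by
    apply Set.uIcc_subset_uIcc Set.left_mem_uIcc
    rw [Set.uIcc_of_le (by norm_num)]; constructor <;> norm_num
  have hsub2 : Set.uIcc (1/2 : ℝ) 1 ⊆ Set.uIcc (0:ℝ) 1 := by
    apply Set.uIcc_subset_uIcc _ Set.right_mem_uIcc
    rw [Set.uIcc_of_le (by norm_num)]; constructor <;> norm_num
  have hsplit : B = (∫ t in (0:ℝ)..(1/2), f t) + ∫ t in (1/2 : ℝ)..1, f t :=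
    (integral_add_adjacent_intervals (hf.mono_set hsub1) (hf.mono_set hsub2)).symm
  have hpiece1 : (2:ℝ) ^ (-b) * ((1/2:ℝ) ^ a / a) ≤ ∫ t in (0:ℝ)..(1/2), f t := by
    have : ∫ t in (0:ℝ)..(1/2), (2:ℝ) ^ (-b) * t ^ (a - 1) ≤ ∫ t in (0:ℝ)..(1/2), f t := by
      apply integral_mono_on (by norm_num)
        ((hga.mono_set hsub1).const_mul _) (hf.mono_set hsub1)
      intro t ht
      have h2 : (2:ℝ) ^ (-b) ≤ (1 - t) ^ (b - 1) :=
        aux_rpow_lower hb (by linarith [ht.2]) (by linarith [ht.1])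
      calc (2:ℝ) ^ (-b) * t ^ (a - 1) ≤ (1 - t) ^ (b - 1) * t ^ (a - 1) :=
            mul_le_mul_of_nonneg_right h2 (Real.rpow_nonneg ht.1 _)
        _ = f t := by rw [hf_def]; ring
    rwa [integral_const_mul, aux_rpow_integral a ha (1/2) (by norm_num)] at this
  have hpiece2 : (2:ℝ) ^ (-a) * ((1/2:ℝ) ^ b / b) ≤ ∫ t in (1/2 : ℝ)..1, f t := by
    have hbint12 : IntervalIntegrable (fun t : ℝ => (1 - t) ^ (b - 1))
        MeasureTheory.volume (1/2) 1 := hgb.mono_set hsub2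
    have : ∫ t in (1/2 : ℝ)..1, (2:ℝ) ^ (-a) * (1 - t) ^ (b - 1)
        ≤ ∫ t in (1/2 : ℝ)..1, f t := by
      apply integral_mono_on (by norm_num) (hbint12.const_mul _) (hf.mono_set hsub2)
      intro t ht
      have h2 : (2:ℝ) ^ (-a) ≤ t ^ (a - 1) :=
        aux_rpow_lower ha ht.1 ht.2
      calc (2:ℝ) ^ (-a) * (1 - t) ^ (b - 1) ≤ t ^ (a - 1) * (1 - t) ^ (b - 1) :=
            mul_le_mul_of_nonneg_right h2
              (Real.rpow_nonneg (by linarith [ht.2]) _)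
        _ = f t := rfl
    rw [integral_const_mul] at this
    rw [intervalIntegral.integral_comp_sub_left (fun t => t ^ (b - 1)) 1] at this
    norm_num at this
    rwa [aux_rpow_integral b hb (1/2) (by norm_num)] at this
  have h2half : ∀ c : ℝ, ((1:ℝ)/2) ^ c = (2:ℝ) ^ (-c) := by
    intro c
    rw [one_div, Real.inv_rpow (by norm_num), ← Real.rpow_neg (by norm_num)]
  have h2ab : (2:ℝ) ^ (-(a+b)) = (2:ℝ) ^ (-a) * (2:ℝ) ^ (-b) := by
    rw [← Real.rpow_add (by norm_num)]; ring_nf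
  have hBge : (2:ℝ) ^ (-(a+b)) * (1 / a + 1 / b) ≤ B := by
    rw [hsplit]
    have e1 : (2:ℝ) ^ (-b) * ((1/2:ℝ) ^ a / a) = (2:ℝ) ^ (-(a+b)) * (1/a) := by
      rw [h2half, h2ab]; ring
    have e2 : (2:ℝ) ^ (-a) * ((1/2:ℝ) ^ b / b) = (2:ℝ) ^ (-(a+b)) * (1/b) := by
      rw [h2half, h2ab]; ring
    rw [e1] at hpiece1; rw [e2] at hpiece2
    linarith [hpiece1, hpiece2]
  -- positivity facts
  have hGa := Real.Gamma_pos_of_pos ha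
  have hGb := Real.Gamma_pos_of_pos hb
  have hGab := Real.Gamma_pos_of_pos (by linarith : (0:ℝ) < a + b)
  have h2pos : (0:ℝ) < (2:ℝ) ^ (-(a+b)) := Real.rpow_pos_of_pos (by norm_num) _
  have hBpos : 0 < B := lt_of_lt_of_le (by positivity) hBge
  have hG : Real.Gamma (a + b) / (Real.Gamma a * Real.Gamma b) = 1 / B := by
    rw [hkey]
    field_simp
  rw [hG]
  constructor
  · have h1 : (1:ℝ) / (1/a + 1/b) ≤ 1 / B :=
      one_div_le_one_div_of_le hBpos hBle
    have h2 : a * b / (a + b) = 1 / (1/a + 1/b) := by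
      field_simp
      ring
    rw [h2]; exact h1
  · have h1 : (1:ℝ) / B ≤ 1 / ((2:ℝ) ^ (-(a+b)) * (1/a + 1/b)) :=
      one_div_le_one_div_of_le (by positivity) hBge
    have h2 : (1:ℝ) / ((2:ℝ) ^ (-(a+b)) * (1/a + 1/b))
        = (2:ℝ) ^ (a+b) * (a * b / (a + b)) := by
      rw [Real.rpow_neg (by norm_num)]
      have hne : (2:ℝ) ^ (a+b) ≠ 0 := by positivity
      field_simp
      ring
    rw [h2] at h1; exact h1
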